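/- Every G-algebra is a join semilattice under the order x ≤ y iff x ≻ y = 1, with supremum given by x ∨ y = (x ≻ y) ≻ y. -/

import Mathlib

class GAlgebra (A : Type*) where
  succ : A → A → A
  one : A
  g1 : ∀ x, succ one x = x
  g2 : ∀ x, succ x one = one
  g3 : ∀ x y, succ (succ x y) y = succ (succ y x) x
  g4 : ∀ x y z, succ x (succ y z) = one → succ y (succ x z) = one

open GAlgebra

local infixr:70 " ≻ " => GAlgebra.succ

/-! Write `x ≤ y` for `x ≻ y = one`. The exchange law (G4) turns `x ≻ y ≤ x ≻ y` into
`x ≤ (x ≻ y) ≻ y`, and `x ≤ x` into `y ≤ x ≻ y`. For an upper bound `z` of `x` and `y`, (G3)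
gives `z = (z ≻ y) ≻ y`, and two exchanges reduce `(x ≻ y) ≻ y ≤ (z ≻ y) ≻ y` to `x ≤ z`,
once `((x ≻ y) ≻ y) ≻ y` is rewritten as `x ≻ y`. -/

section

variable {A : Type*} [GAlgebra A]

theorem succ_self (x : A) : x ≻ x = one := by
  simpa only [g1, g2] using (g3 x one).symm

theorem succ_succ_self (x y : A) : y ≻ (x ≻ y) = one :=
  g4 _ _ _ (by rw [succ_self, g2])

theorem succ_succ_of_succ_eq_one {y z : A} (h : y ≻ z = one) : (z ≻ y) ≻ y = z := by
  rw [← g3, h, g1]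

theorem succ_succ_succ (x y : A) : ((x ≻ y) ≻ y) ≻ y = x ≻ y := by
  rw [g3, succ_succ_self, g1]

end

theorem stmt8 {A : Type*} [GAlgebra A] (x y : A) :
    x ≻ ((x ≻ y) ≻ y) = (one : A) ∧
    y ≻ ((x ≻ y) ≻ y) = (one : A) ∧
    ∀ z : A, x ≻ z = (one : A) → y ≻ z = (one : A) → ((x ≻ y) ≻ y) ≻ z = (one : A) := by
  refine ⟨g4 _ _ _ (succ_self _), succ_succ_self _ _, fun z hxz hyz => ?_⟩
  rw [← succ_succ_of_succ_eq_one hyz]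
  apply g4
  rw [succ_succ_succ]
  apply g4
  rwa [succ_succ_of_succ_eq_one hyz]
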